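/- Let δ ∈ (0,1), let G = (V,E) be a simple graph on n vertices with minimal degree at least δn and Cheeger constant Φ(G) = r, and let 𝒫: V = V₁ ⊔ … ⊔ V_k be a δ-primary decomposition of G. Then the graph H(𝒫, rδ²n²/(2k²)) is connected. -/

import Mathlib

/-! If `H(𝒫, c)` were disconnected, there would be a set `T` of parts, with `T` and `Tᶜ` nonempty,
joined by no edge of `H(𝒫, c)`; replacing `T` by `Tᶜ` if necessary, `S = ⋃_{i ∈ T} V_i` has
`Vol S ≤ Vol V / 2`. With `r = Φ(G)` and `c = r δ² n² / (2k²)`,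
`r Vol S ≤ |∂S| ≤ |T| |Tᶜ| c ≤ k² c / 4 = r δ² n² / 8`. But `S` contains a part, which has at least
`δn/2` vertices of degree at least `δn`, so `Vol S ≥ δ² n² / 2`; and `r > 0` because `G` is
connected with at least two vertices. -/

open scoped Classical

noncomputable section

namespace Paper

variable {V : Type} [Fintype V]

/-- The degree of a vertex `v` in a simple graph `G`. -/
def deg (G : SimpleGraph V) (v : V) : ℕ := Nat.card {u | G.Adj v u}

/-- The transition matrix of the simple random walk on `G`. -/
def transMat (G : SimpleGraph V) : Matrix V V ℝ :=
  fun v u => if G.Adj v u then (deg G v : ℝ)⁻¹ else 0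

/-- Rayleigh quotients of `P` over unit functions orthogonal to constants in `L²(m)`;
its supremum is the second largest eigenvalue `λ₂`. -/
def rayleigh (P : Matrix V V ℝ) (m : V → ℝ) : Set ℝ :=
  {r | ∃ f : V → ℝ, (∑ v, m v * f v) = 0 ∧ (∑ v, m v * f v ^ 2) = 1 ∧
       r = ∑ v, m v * f v * (∑ u, P v u * f u)}

/-- The spectral gap `1 - λ₂` of `P`. -/
def matGap (P : Matrix V V ℝ) (m : V → ℝ) : ℝ := 1 - sSup (rayleigh P m)

/-- The spectral gap `γ(G) = 1 - λ₂` of the simple random walk on `G`. -/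
def gap (G : SimpleGraph V) : ℝ := matGap (transMat G) fun v => (deg G v : ℝ)

/-- The number of edges between `v` and the set `S`. -/
def degIn (G : SimpleGraph V) (v : V) (S : Finset V) : ℕ :=
  (S.filter fun u => G.Adj v u).card

/-- The number of edges of `G` between the (disjoint) vertex sets `A` and `B`. -/
def eBetween (G : SimpleGraph V) (A B : Finset V) : ℕ :=
  ((A ×ˢ B).filter fun p => G.Adj p.1 p.2).card

/-- The volume of a set of vertices: the sum of the degrees of its elements. -/
def vol (G : SimpleGraph V) (S : Finset V) : ℕ := ∑ v ∈ S, deg G v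

/-- The Cheeger constant `Φ(G) = min {|∂S| / Vol S : S ≠ ∅, π(S) ≤ 1/2}` of `G`. -/
def cheeger (G : SimpleGraph V) : ℝ :=
  sInf {r | ∃ S : Finset V, S.Nonempty ∧ 2 * vol G S ≤ vol G Finset.univ ∧
    r = (eBetween G S Sᶜ : ℝ) / (vol G S : ℝ)}

/-- `Vs` is a partition of the vertex set into (nonempty) sets. -/
def IsPartition {k : ℕ} (Vs : Fin k → Finset V) : Prop :=
  (∀ v : V, ∃! i, v ∈ Vs i) ∧ ∀ i, (Vs i).Nonempty

/-- The graph `H(𝒫,c)` on `[k]`: `i` and `j` are joined iff `|E(V_i,V_j)| > c`. -/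
def partGraph (G : SimpleGraph V) {k : ℕ} (Vs : Fin k → Finset V) (c : ℝ) :
    SimpleGraph (Fin k) :=
  SimpleGraph.fromRel fun i j => c < (eBetween G (Vs i) (Vs j) : ℝ)

/-- A `δ`-primary decomposition of `G`. -/
def IsPrimaryDecomposition (G : SimpleGraph V) (δ : ℝ) {k : ℕ}
    (Vs : Fin k → Finset V) : Prop :=
  IsPartition Vs ∧
  (k : ℝ) ≤ 2 / δ ∧
  (∀ i, δ * (Fintype.card V : ℝ) / 2 ≤ ((Vs i).card : ℝ)) ∧
  (∀ i, ∀ v ∈ Vs i, δ ^ 4 * (Fintype.card V : ℝ) / 40 ≤ (degIn G v (Vs i) : ℝ)) ∧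
  (∀ i, δ ^ 10 / 2 ^ 22 ≤ gap (G.induce (↑(Vs i) : Set V)))

lemma deg_eq_degree (G : SimpleGraph V) (v : V) : deg G v = G.degree v := by
  rw [deg, ← G.card_neighborSet_eq_degree, ← Nat.card_eq_fintype_card]
  rfl

lemma vol_add_vol_compl (G : SimpleGraph V) (S : Finset V) :
    vol G S + vol G Sᶜ = vol G Finset.univ :=
  Finset.sum_add_sum_compl S _

lemma two_mul_vol_le_or_two_mul_vol_compl_le (G : SimpleGraph V) (S : Finset V) :
    2 * vol G S ≤ vol G Finset.univ ∨ 2 * vol G Sᶜ ≤ vol G Finset.univ := by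
  have := vol_add_vol_compl G S
  omega

omit [Fintype V] in
lemma vol_pos (G : SimpleGraph V) (hdeg : ∀ v, 0 < deg G v) {S : Finset V}
    (hS : S.Nonempty) : 0 < vol G S :=
  Finset.sum_pos (fun v _ => hdeg v) hS

omit [Fintype V] in
lemma card_mul_le_vol (G : SimpleGraph V) {d : ℝ} (hdeg : ∀ v, d ≤ deg G v) (S : Finset V) :
    S.card * d ≤ vol G S := by
  rw [vol, Nat.cast_sum, ← nsmul_eq_mul, ← Finset.sum_const]
  exact Finset.sum_le_sum fun v _ => hdeg v

lemma nontrivial_of_deg_pos (G : SimpleGraph V) {v : V} (hv : 0 < deg G v) : Nontrivial V := by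
  rw [deg_eq_degree, G.degree_pos_iff_exists_adj] at hv
  obtain ⟨w, hvw⟩ := hv
  exact nontrivial_of_ne v w hvw.ne

lemma eBetween_compl_pos (G : SimpleGraph V) (hconn : G.Connected) {S : Finset V}
    (hS : S.Nonempty) (hSc : Sᶜ.Nonempty) : 0 < eBetween G S Sᶜ := by
  obtain ⟨u, hu⟩ := hS
  obtain ⟨w, hw⟩ := hSc
  obtain ⟨p⟩ := hconn.preconnected u w
  obtain ⟨d, -, hd₁, hd₂⟩ := p.exists_boundary_dart (S : Set V) hu (by simpa using hw)
  refine Finset.card_pos.mpr ⟨d.toProd, ?_⟩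
  simp only [Finset.mem_filter, Finset.mem_product, Finset.mem_compl]
  exact ⟨⟨hd₁, hd₂⟩, d.adj⟩

section Cheeger

variable (G : SimpleGraph V)

def cheegerRatios : Set ℝ :=
  {r | ∃ S : Finset V, S.Nonempty ∧ 2 * vol G S ≤ vol G Finset.univ ∧
    r = (eBetween G S Sᶜ : ℝ) / (vol G S : ℝ)}

lemma cheeger_eq_sInf_cheegerRatios : cheeger G = sInf (cheegerRatios G) := rfl

lemma cheegerRatios_finite : (cheegerRatios G).Finite :=
  (Set.finite_range fun S : Finset V => (eBetween G S Sᶜ : ℝ) / (vol G S : ℝ)).subset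
    fun _ ⟨S, _, _, hr⟩ => ⟨S, hr.symm⟩

lemma cheeger_mul_vol_le_eBetween {S : Finset V} (hvol : 2 * vol G S ≤ vol G Finset.univ) :
    cheeger G * vol G S ≤ eBetween G S Sᶜ := by
  rcases S.eq_empty_or_nonempty with rfl | hS
  · simp [vol]
  have hle : cheeger G ≤ (eBetween G S Sᶜ : ℝ) / vol G S :=
    csInf_le ⟨0, fun _ ⟨_, _, _, hr⟩ => hr ▸ by positivity⟩ ⟨S, hS, hvol, rfl⟩
  rcases (vol G S).eq_zero_or_pos with h | h
  · simp [h]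
  · rwa [le_div_iff₀ (by exact_mod_cast h)] at hle

lemma cheeger_pos [Nontrivial V] (hconn : G.Connected) : 0 < cheeger G := by
  have hdeg (v : V) : 0 < deg G v :=
    deg_eq_degree G v ▸ hconn.preconnected.degree_pos_of_nontrivial v
  have hpos : ∀ r ∈ cheegerRatios G, 0 < r := by
    rintro r ⟨S, hS, hvol, rfl⟩
    have hSc : Sᶜ.Nonempty := by
      refine Finset.nonempty_of_sum_ne_zero (f := deg G) (show vol G Sᶜ ≠ 0 from ?_)
      have := vol_add_vol_compl G S
      have := vol_pos G hdeg hS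
      omega
    exact div_pos (by exact_mod_cast eBetween_compl_pos G hconn hS hSc)
      (by exact_mod_cast vol_pos G hdeg hS)
  have hne : (cheegerRatios G).Nonempty := by
    obtain ⟨v, w, hvw⟩ := exists_pair_ne V
    rcases two_mul_vol_le_or_two_mul_vol_compl_le G {v} with h | h
    · exact ⟨_, {v}, Finset.singleton_nonempty v, h, rfl⟩
    · exact ⟨_, {v}ᶜ, ⟨w, by simpa using hvw.symm⟩, h, rfl⟩
  rw [cheeger_eq_sInf_cheegerRatios]
  exact hpos _ (hne.csInf_mem (cheegerRatios_finite G))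

end Cheeger

lemma exists_cut_of_not_preconnected {α : Type} [Fintype α] [DecidableEq α] {H : SimpleGraph α}
    (hH : ¬H.Preconnected) :
    ∃ T : Finset α, T.Nonempty ∧ Tᶜ.Nonempty ∧ ∀ i ∈ T, ∀ j ∈ Tᶜ, ¬H.Adj i j := by
  simp only [SimpleGraph.Preconnected, not_forall] at hH
  obtain ⟨a, b, hab⟩ := hH
  refine ⟨Finset.univ.filter (H.Reachable a), ⟨a, by simp⟩, ⟨b, by simpa using hab⟩, ?_⟩
  simp only [Finset.mem_compl, Finset.mem_filter, Finset.mem_univ, true_and]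
  exact fun i hi j hj hij => hj (hi.trans hij.reachable)

section Partition

variable {k : ℕ} {Vs : Fin k → Finset V}

lemma biUnion_compl_eq (hpart : ∀ v : V, ∃! i, v ∈ Vs i) (T : Finset (Fin k)) :
    (T.biUnion Vs)ᶜ = Tᶜ.biUnion Vs := by
  ext v
  obtain ⟨i, hi, hunique⟩ := hpart v
  simp only [Finset.mem_compl, Finset.mem_biUnion, not_exists, not_and]
  exact ⟨fun h => ⟨i, fun hiT => h i hiT hi, hi⟩,
    fun ⟨j, hj, hvj⟩ i' hi' hvi' => hj (hunique j hvj ▸ hunique i' hvi' ▸ hi')⟩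

lemma exists_cut_two_mul_vol_le (G : SimpleGraph V) (hpart : ∀ v : V, ∃! i, v ∈ Vs i)
    {H : SimpleGraph (Fin k)} (hH : ¬H.Preconnected) :
    ∃ T : Finset (Fin k), T.Nonempty ∧ 2 * vol G (T.biUnion Vs) ≤ vol G Finset.univ ∧
      ∀ i ∈ T, ∀ j ∈ Tᶜ, ¬H.Adj i j := by
  obtain ⟨T, hT, hTc, hcut⟩ := exists_cut_of_not_preconnected hH
  rcases two_mul_vol_le_or_two_mul_vol_compl_le G (T.biUnion Vs) with hhalf | hhalf
  · exact ⟨T, hT, hhalf, hcut⟩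
  · refine ⟨Tᶜ, hTc, biUnion_compl_eq hpart T ▸ hhalf, fun i hi j hj hij => ?_⟩
    exact hcut j (by simpa using hj) i hi hij.symm

omit [Fintype V] in
lemma mul_le_vol_biUnion (G : SimpleGraph V) {m d : ℝ} (hd : 0 ≤ d) (hsize : ∀ i, m ≤ (Vs i).card)
    (hdeg : ∀ v, d ≤ deg G v) {T : Finset (Fin k)} {t : Fin k} (ht : t ∈ T) :
    m * d ≤ vol G (T.biUnion Vs) :=
  calc m * d ≤ (Vs t).card * d := by gcongr; exact hsize t
    _ ≤ (T.biUnion Vs).card * d := by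
      gcongr
      exact Finset.subset_biUnion_of_mem Vs ht
    _ ≤ vol G (T.biUnion Vs) := card_mul_le_vol G hdeg _

omit [Fintype V] in
lemma eBetween_biUnion_le (G : SimpleGraph V) (Vs : Fin k → Finset V) (T U : Finset (Fin k)) :
    eBetween G (T.biUnion Vs) (U.biUnion Vs) ≤ ∑ i ∈ T, ∑ j ∈ U, eBetween G (Vs i) (Vs j) := by
  rw [← Finset.sum_product (f := fun q => eBetween G (Vs q.1) (Vs q.2))]
  refine (Finset.card_le_card ?_).trans Finset.card_biUnion_le
  rintro ⟨u, w⟩ hp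
  simp only [Finset.mem_filter, Finset.mem_product, Finset.mem_biUnion] at hp ⊢
  obtain ⟨⟨⟨i, hiT, hui⟩, ⟨j, hjU, hwj⟩⟩, hadj⟩ := hp
  exact ⟨(i, j), ⟨hiT, hjU⟩, ⟨hui, hwj⟩, hadj⟩

omit [Fintype V] in
lemma eBetween_biUnion_le_of_forall_not_adj (G : SimpleGraph V) {c : ℝ} {T U : Finset (Fin k)}
    (hTU : Disjoint T U) (hcut : ∀ i ∈ T, ∀ j ∈ U, ¬(partGraph G Vs c).Adj i j) :
    eBetween G (T.biUnion Vs) (U.biUnion Vs) ≤ T.card * U.card * c := by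
  have hpair : ∀ i ∈ T, ∀ j ∈ U, (eBetween G (Vs i) (Vs j) : ℝ) ≤ c := fun i hi j hj => by
    have := hcut i hi j hj
    simp only [partGraph, SimpleGraph.fromRel_adj, not_and, not_or, not_lt] at this
    exact (this (Finset.disjoint_left.mp hTU hi <| · ▸ hj)).1
  calc (eBetween G (T.biUnion Vs) (U.biUnion Vs) : ℝ)
      ≤ ∑ i ∈ T, ∑ j ∈ U, (eBetween G (Vs i) (Vs j) : ℝ) := by
        exact_mod_cast eBetween_biUnion_le G Vs T U
    _ ≤ ∑ _i ∈ T, ∑ _j ∈ U, c := Finset.sum_le_sum fun i hi => Finset.sum_le_sum (hpair i hi)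
    _ = T.card * U.card * c := by simp only [Finset.sum_const, nsmul_eq_mul]; ring

lemma cheeger_mul_vol_le_of_forall_not_adj (G : SimpleGraph V) (hpart : ∀ v : V, ∃! i, v ∈ Vs i)
    {c : ℝ} (hc : 0 ≤ c) {T : Finset (Fin k)}
    (hhalf : 2 * vol G (T.biUnion Vs) ≤ vol G Finset.univ)
    (hcut : ∀ i ∈ T, ∀ j ∈ Tᶜ, ¬(partGraph G Vs c).Adj i j) :
    cheeger G * vol G (T.biUnion Vs) ≤ k ^ 2 / 4 * c := by
  have hcard : (T.card + Tᶜ.card : ℝ) = k := by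
    exact_mod_cast (Finset.card_add_card_compl T).trans (Fintype.card_fin k)
  calc cheeger G * vol G (T.biUnion Vs) ≤ eBetween G (T.biUnion Vs) (T.biUnion Vs)ᶜ :=
        cheeger_mul_vol_le_eBetween G hhalf
    _ ≤ T.card * Tᶜ.card * c := by
        rw [biUnion_compl_eq hpart]
        exact eBetween_biUnion_le_of_forall_not_adj G disjoint_compl_right hcut
    _ ≤ k ^ 2 / 4 * c := by
        gcongr
        nlinarith [four_mul_le_sq_add (T.card : ℝ) Tᶜ.card]

end Partition

/-- from the proof of Theorem 1.2.  Let `G` be a connected simple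
graph on `n` vertices with minimal degree at least `δn` and Cheeger constant `r`, and
let `𝒫 : V = V₁ ⊔ … ⊔ V_k` be a `δ`-primary decomposition of `G`.  Then the graph
`H(𝒫, r δ² n² / (2k²))` is connected. -/
theorem primary_partition_graph_connected (δ : ℝ) (hδ : δ ∈ Set.Ioo (0 : ℝ) 1)
    (G : SimpleGraph V) (hconn : G.Connected)
    (hdeg : ∀ v : V, δ * (Fintype.card V : ℝ) ≤ (deg G v : ℝ))
    {k : ℕ} (Vs : Fin k → Finset V) (hprim : IsPrimaryDecomposition G δ Vs) :
    (partGraph G Vs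
      (cheeger G * δ ^ 2 * (Fintype.card V : ℝ) ^ 2 / (2 * (k : ℝ) ^ 2))).Connected := by
  obtain ⟨⟨hpart, -⟩, -, hsize, -, -⟩ := hprim
  set n := Fintype.card V
  obtain ⟨v⟩ := hconn.nonempty
  have hδn : 0 < δ * n := mul_pos hδ.1 (by exact_mod_cast Fintype.card_pos_iff.mpr ⟨v⟩)
  have : Nontrivial V := nontrivial_of_deg_pos G (v := v) (by exact_mod_cast hδn.trans_le (hdeg v))
  have hr := cheeger_pos G hconn
  obtain ⟨i, hi, -⟩ := hpart v
  refine (SimpleGraph.connected_iff _).mpr ⟨?_, ⟨i⟩⟩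
  by_contra hH
  obtain ⟨T, ⟨t, ht⟩, hhalf, hcut⟩ := exists_cut_two_mul_vol_le G hpart hH
  have hk : (0 : ℝ) < k := by exact_mod_cast t.pos
  have hupper := cheeger_mul_vol_le_of_forall_not_adj G hpart (by positivity) hhalf hcut
  have hlower : cheeger G * (δ * n / 2 * (δ * n)) ≤ cheeger G * vol G (T.biUnion Vs) := by
    gcongr
    exact mul_le_vol_biUnion G hδn.le hsize hdeg ht
  have hc : (k : ℝ) ^ 2 / 4 * (cheeger G * δ ^ 2 * n ^ 2 / (2 * k ^ 2)) =
      cheeger G * (δ * n) ^ 2 / 8 := by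
    field_simp
    ring
  linarith [mul_pos hr (pow_pos hδn 2)]

end Paper
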